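/- arXiv:2111.05213 — 3 statements merged into one kernel-verified Lean document; each statement's English description precedes it below -/
import Mathlib

section
/- There exists a constant C > 0 such that for all x, y ∈ ℝ, |a'(x) − a'(y)| ≤ C |a(x) − a(y)|. -/
/-!
Write `f = (1 + ψ) ^ (-(1 + ε))`, so that `a' = f` and `a x - a y = ∫ y..x, f`. Since `ψ'` is
bounded (it is continuous and equals `± 1` outside `[-1, 1]`) and `1 + ψ ≥ 1`,
`|f'| = (1 + ε) (1 + ψ) ^ (-(2 + ε)) |ψ'| ≤ (1 + ε) sup |ψ'| · f`; integrating `f'` from `y` to `x`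
gives `|f x - f y| ≤ (1 + ε) sup |ψ'| · |a x - a y|`.
-/

open MeasureTheory

theorem abs_sub_le_mul_abs_integral_of_abs_deriv_le {f f' : ℝ → ℝ} {K x y : ℝ} (hK : 0 ≤ K)
    (hf : ∀ t, HasDerivAt f (f' t) t) (hf' : IntervalIntegrable f' volume y x)
    (hbound : ∀ t, |f' t| ≤ K * f t) :
    |f x - f y| ≤ K * |∫ t in y..x, f t| := by
  have hfc : Continuous f := continuous_iff_continuousAt.2 fun t => (hf t).continuousAt
  rw [← intervalIntegral.integral_eq_sub_of_hasDerivAt (fun t _ => hf t) hf', ← abs_of_nonneg hK,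
    ← abs_mul, ← intervalIntegral.integral_const_mul]
  exact intervalIntegral.norm_integral_le_abs_of_norm_le
    (.of_forall fun t => (Real.norm_eq_abs (f' t)).trans_le (hbound t))
    ((hfc.const_mul K).intervalIntegrable _ _)

theorem hasDerivAt_integral_Iic {E : Type*} [NormedAddCommGroup E] [NormedSpace ℝ E]
    [CompleteSpace E] {f : ℝ → E} (hf : Integrable f) (hfc : Continuous f) (x : ℝ) :
    HasDerivAt (fun u => ∫ t in Set.Iic u, f t) (f x) x := by
  have hsplit : (fun u => ∫ t in Set.Iic u, f t) =
      fun u => (∫ t in (0 : ℝ)..u, f t) + ∫ t in Set.Iic 0, f t := by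
    funext u
    rw [← intervalIntegral.integral_Iic_sub_Iic hf.integrableOn hf.integrableOn, sub_add_cancel]
  rw [hsplit]
  exact (intervalIntegral.integral_hasDerivAt_right hf.intervalIntegrable
    hfc.stronglyMeasurable.stronglyMeasurableAtFilter hfc.continuousAt).add_const _

theorem abs_neg_mul_rpow_sub_one_mul_le {u d p M : ℝ} (hu : 1 ≤ u) (hp : 0 ≤ p) (hd : |d| ≤ M) :
    |-p * u ^ (-p - 1) * d| ≤ p * M * u ^ (-p) := by
  have hpow : 0 < u ^ (-p - 1) := Real.rpow_pos_of_pos (by linarith) _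
  calc |-p * u ^ (-p - 1) * d| = p * u ^ (-p - 1) * |d| := by
        rw [abs_mul, abs_mul, abs_neg, abs_of_nonneg hp, abs_of_pos hpow]
    _ ≤ p * u ^ (-p) * M := by
        gcongr
        linarith
    _ = p * M * u ^ (-p) := by ring

section

variable {ψ : ℝ → ℝ}

theorem one_add_abs_le_two_mul_one_add (hψ0 : ∀ y, 0 ≤ ψ y) (hψabs : ∀ y, 1 ≤ |y| → ψ y = |y|)
    (y : ℝ) : 1 + |y| ≤ 2 * (1 + ψ y) := by
  rcases le_or_gt |y| 1 with h | h
  · linarith [hψ0 y]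
  · rw [hψabs y h.le]
    linarith [abs_nonneg y]

theorem continuous_one_add_rpow (hψ : Continuous ψ) (hψ0 : ∀ y, 0 ≤ ψ y) (r : ℝ) :
    Continuous fun y => (1 + ψ y) ^ r :=
  (continuous_const.add hψ).rpow_const fun y =>
    .inl (by simp only [Pi.add_apply]; linarith [hψ0 y])

theorem hasDerivAt_one_add_rpow (hψ : Differentiable ℝ ψ) (hψ0 : ∀ y, 0 ≤ ψ y) (r y : ℝ) :
    HasDerivAt (fun y => (1 + ψ y) ^ r) (r * (1 + ψ y) ^ (r - 1) * deriv ψ y) y := by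
  have := ((hψ y).hasDerivAt.const_add 1).rpow_const (p := r) (.inl (by linarith [hψ0 y]))
  simpa [mul_comm, mul_left_comm, mul_assoc] using this

theorem integrable_one_add_rpow_neg (hψ : Continuous ψ) (hψ0 : ∀ y, 0 ≤ ψ y)
    (hψabs : ∀ y, 1 ≤ |y| → ψ y = |y|) {p : ℝ} (hp : 1 < p) :
    Integrable fun y => (1 + ψ y) ^ (-p) := by
  have hmajor : Integrable fun y : ℝ => 2 ^ p * (1 + ‖y‖) ^ (-p) :=
    (integrable_one_add_norm (by simpa using hp)).const_mul _
  refine hmajor.mono' (continuous_one_add_rpow hψ hψ0 _).aestronglyMeasurable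
    (.of_forall fun y => ?_)
  have hpos : 0 < 1 + ψ y := by linarith [hψ0 y]
  calc ‖(1 + ψ y) ^ (-p)‖ = (1 + ψ y) ^ (-p) := by
        rw [Real.norm_eq_abs, abs_of_pos (Real.rpow_pos_of_pos hpos _)]
    _ ≤ ((1 + |y|) / 2) ^ (-p) := Real.rpow_le_rpow_of_nonpos (by positivity)
        (by linarith [one_add_abs_le_two_mul_one_add hψ0 hψabs y]) (by linarith)
    _ = 2 ^ p * (1 + ‖y‖) ^ (-p) := by
        rw [Real.div_rpow (by positivity) zero_le_two, Real.rpow_neg zero_le_two,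
          Real.norm_eq_abs]
        field_simp

theorem exists_pos_abs_deriv_le (hψ : ContDiff ℝ 1 ψ) (hψabs : ∀ y, 1 ≤ |y| → ψ y = |y|) :
    ∃ M > 0, ∀ y, |deriv ψ y| ≤ M := by
  obtain ⟨M, hM⟩ := (isCompact_Icc (a := -1) (b := 1)).exists_bound_of_continuousOn
    (hψ.continuous_deriv le_rfl).continuousOn
  refine ⟨max M 1, by positivity, fun y => ?_⟩
  rcases le_or_gt |y| 1 with h | h
  · exact (hM y (abs_le.mp h)).trans (le_max_left _ _)
  · have hev : ψ =ᶠ[nhds y] (|·|) := by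
      filter_upwards [(isOpen_lt continuous_const continuous_abs).mem_nhds h] with z hz
      exact hψabs z hz.le
    rw [hev.deriv_eq, deriv_abs]
    refine le_trans ?_ (le_max_right _ _)
    rcases lt_trichotomy y 0 with hy | hy | hy <;> simp [hy]

end

/-- There exists a constant `C > 0` such that for all `x, y ∈ ℝ`,
`|a'(x) − a'(y)| ≤ C |a(x) − a(y)|`, where `a(x) = ∫_{-∞}^x (1+ψ(y))^{-(1+ε)} dy`. -/
theorem stmt1 (ε : ℝ) (hε : 0 < ε) (ψ : ℝ → ℝ)
    (hψ : ContDiff ℝ 3 ψ) (hψ0 : ∀ y, 0 ≤ ψ y)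
    (hψabs : ∀ y, 1 ≤ |y| → ψ y = |y|)
    (a : ℝ → ℝ)
    (ha : ∀ x, a x = ∫ y in Set.Iic x, (1 + ψ y) ^ (-(1 + ε))) :
    ∃ C > 0, ∀ x y : ℝ, |deriv a x - deriv a y| ≤ C * |a x - a y| := by
  set p := 1 + ε
  have hψ1 : ContDiff ℝ 1 ψ := hψ.of_le (by norm_num)
  have hint : Integrable fun y => (1 + ψ y) ^ (-p) :=
    integrable_one_add_rpow_neg hψ.continuous hψ0 hψabs (by linarith)
  have hderiv (x : ℝ) : deriv a x = (1 + ψ x) ^ (-p) := by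
    rw [show a = _ from funext ha]
    exact (hasDerivAt_integral_Iic hint (continuous_one_add_rpow hψ.continuous hψ0 _) x).deriv
  obtain ⟨M, hM0, hM⟩ := exists_pos_abs_deriv_le hψ1 hψabs
  refine ⟨p * M, by positivity, fun x y => ?_⟩
  rw [hderiv, hderiv, ha, ha,
    intervalIntegral.integral_Iic_sub_Iic hint.integrableOn hint.integrableOn]
  refine abs_sub_le_mul_abs_integral_of_abs_deriv_le (by positivity)
    (hasDerivAt_one_add_rpow (hψ1.differentiable one_ne_zero) hψ0 _) ?_
    fun t => ?_
  · exact ((continuous_const.mul (continuous_one_add_rpow hψ.continuous hψ0 _)).mul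
      (hψ1.continuous_deriv le_rfl)).intervalIntegrable _ _
  · simpa using abs_neg_mul_rpow_sub_one_mul_le (by linarith [hψ0 t]) (by positivity) (hM t)
end

section
/- There exists a constant C > 0 such that for all x, y ∈ ℝ, |x·a'(x) − y·a'(y)| ≤ C |a(x) − a(y)|. -/
open MeasureTheory

set_option maxHeartbeats 1000000 in
/-- There exists a constant `C > 0` such that for all `x, y ∈ ℝ`,
`|x·a'(x) − y·a'(y)| ≤ C |a(x) − a(y)|`, where `a(x) = ∫_{-∞}^x (1+ψ(y))^{-(1+ε)} dy`. -/
theorem stmt2 (ε : ℝ) (hε : 0 < ε) (ψ : ℝ → ℝ)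
    (hψ : ContDiff ℝ 3 ψ) (hψ0 : ∀ y, 0 ≤ ψ y)
    (hψabs : ∀ y, 1 ≤ |y| → ψ y = |y|)
    (a : ℝ → ℝ)
    (ha : ∀ x, a x = ∫ y in Set.Iic x, (1 + ψ y) ^ (-(1 + ε))) :
    ∃ C > 0, ∀ x y : ℝ, |x * deriv a x - y * deriv a y| ≤ C * |a x - a y| := by
  set f : ℝ → ℝ := fun y => (1 + ψ y) ^ (-(1 + ε)) with hfdef
  have hpos : ∀ y : ℝ, (0:ℝ) < 1 + ψ y := fun y => by have := hψ0 y; linarith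
  have hfc : Continuous f :=
    (continuous_const.add hψ.continuous).rpow_const (fun y => Or.inl (hpos y).ne')
  have hf0 : ∀ y, 0 ≤ f y := fun y => Real.rpow_nonneg (hpos y).le _
  -- global integrability
  have hint : Integrable f := by
    have hint : Integrable (fun y : ℝ => (2:ℝ) ^ (1+ε) * (1 + ‖y‖) ^ (-(1 + ε))) := by
      refine (integrable_one_add_norm ?_).const_mul _
      simp; linarith
    refine hint.mono' hfc.aestronglyMeasurable ?_
    filter_upwards with y
    have h2 : 1 + |y| ≤ 2 * (1 + ψ y) := by
      rcases le_or_gt (|y|) 1 with h | h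
      · have := hψ0 y; linarith
      · rw [hψabs y h.le]; linarith
    have hb : ((2:ℝ) * (1 + ψ y)) ^ (-(1+ε)) ≤ (1 + |y|) ^ (-(1+ε)) :=
      Real.rpow_le_rpow_of_nonpos (by positivity) h2 (by linarith)
    rw [Real.mul_rpow (by norm_num) (hpos y).le] at hb
    rw [Real.norm_eq_abs, abs_of_nonneg (hf0 y), Real.norm_eq_abs]
    calc f y = (2:ℝ)^(1+ε) * ((2:ℝ)^(-(1+ε)) * f y) := by
          rw [← mul_assoc, ← Real.rpow_add (by norm_num), add_neg_cancel, Real.rpow_zero,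
            one_mul]
      _ ≤ _ := mul_le_mul_of_nonneg_left hb (by positivity)
  -- derivative of a
  have hderiv : ∀ x, HasDerivAt a (f x) x := by
    intro x
    have heq : (fun u => a 0 + ∫ t in (0:ℝ)..u, f t) = a := by
      funext u
      rw [ha u, ha 0, ← intervalIntegral.integral_Iic_sub_Iic hint.integrableOn
        hint.integrableOn]
      ring
    rw [← heq]
    exact (intervalIntegral.integral_hasDerivAt_right (hfc.intervalIntegrable _ _)
        hfc.aestronglyMeasurable.stronglyMeasurableAtFilter hfc.continuousAt).const_add (a 0)
  have hda : deriv a = f := funext fun x => (hderiv x).deriv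
  -- ψ' facts
  have hψd : Differentiable ℝ ψ := hψ.differentiable (by norm_num)
  have hψ'c : Continuous (deriv ψ) := hψ.continuous_deriv (by norm_num)
  obtain ⟨M, hM⟩ := (isCompact_Icc (a := (-1:ℝ)) (b := 1)).exists_bound_of_continuousOn
    hψ'c.continuousOn
  set K : ℝ := max M 1 with hKdef
  have hK1 : (1:ℝ) ≤ K := le_max_right _ _
  have hK : ∀ x : ℝ, |x * deriv ψ x| ≤ K * (1 + ψ x) := by
    intro x
    rcases le_or_gt (|x|) 1 with h | h
    · have h1 : |deriv ψ x| ≤ M := by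
        have := hM x ⟨(abs_le.mp h).1, (abs_le.mp h).2⟩
        simpa using this
      have h2 : |x * deriv ψ x| ≤ M := by
        rw [abs_mul]
        calc |x| * |deriv ψ x| ≤ 1 * M :=
              mul_le_mul h h1 (abs_nonneg _) zero_le_one
          _ = M := one_mul M
      have := hψ0 x
      calc |x * deriv ψ x| ≤ M := h2
        _ ≤ K := le_max_left _ _
        _ ≤ K * (1 + ψ x) := le_mul_of_one_le_right (by linarith) (by linarith)
    · have hd : |x * deriv ψ x| = |x| := by
        rcases lt_abs.mp h with hx | hx
        · have hev : ψ =ᶠ[nhds x] (fun y => y) := by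
            filter_upwards [eventually_gt_nhds hx] with y hy
            rw [hψabs y (by rw [abs_of_pos (by linarith)]; exact hy.le),
              abs_of_pos (by linarith)]
          rw [hev.deriv_eq, deriv_id'', mul_one]
        · have hx' : x < -1 := by linarith
          have hev : ψ =ᶠ[nhds x] (fun y => -y) := by
            filter_upwards [eventually_lt_nhds hx'] with y hy
            rw [hψabs y (by rw [abs_of_neg (by linarith)]; linarith),
              abs_of_neg (by linarith)]
          have : deriv ψ x = -1 := by
            rw [hev.deriv_eq]
            simp
          rw [this, mul_neg_one, abs_neg]
      rw [hd, hψabs x h.le]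
      nlinarith [abs_nonneg x]
  set C : ℝ := 1 + (1 + ε) * K with hCdef
  have hC0 : 0 < C := by nlinarith
  refine ⟨C, hC0, ?_⟩
  -- derivative of F z = z * f z
  set g : ℝ → ℝ := fun z => 1 * f z + z * (deriv ψ z * -(1+ε) * (1 + ψ z) ^ (-(1+ε) - 1))
    with hgdef
  have hgc : Continuous g := by
    apply (continuous_const.mul hfc).add
    exact continuous_id.mul ((hψ'c.mul continuous_const).mul
      ((continuous_const.add hψ.continuous).rpow_const
        (fun y => Or.inl (hpos y).ne')))
  have hF : ∀ z : ℝ, HasDerivAt (fun u => u * f u) (g z) z := by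
    intro z
    have h1 : HasDerivAt (fun u => 1 + ψ u) (deriv ψ z) z :=
      ((hψd z).hasDerivAt).const_add 1
    have h2 : HasDerivAt f (deriv ψ z * -(1+ε) * (1 + ψ z) ^ (-(1+ε) - 1)) z :=
      h1.rpow_const (Or.inl (hpos z).ne')
    exact (hasDerivAt_id z).mul h2
  -- pointwise bound |g z| ≤ C * f z
  have hgb : ∀ z : ℝ, |g z| ≤ C * f z := by
    intro z
    have hrw : (1 + ψ z) ^ (-(1+ε) - 1) * (1 + ψ z) = f z := by
      rw [hfdef]
      rw [← Real.rpow_add_one (hpos z).ne' (-(1+ε) - 1)]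
      norm_num
    have hnn : (0:ℝ) ≤ (1 + ψ z) ^ (-(1+ε) - 1) := Real.rpow_nonneg (hpos z).le _
    have h1 : |z * (deriv ψ z * -(1+ε) * (1 + ψ z) ^ (-(1+ε) - 1))| ≤ (1+ε) * K * f z := by
      calc |z * (deriv ψ z * -(1+ε) * (1 + ψ z) ^ (-(1+ε) - 1))|
          = (1+ε) * ((1 + ψ z) ^ (-(1+ε) - 1) * |z * deriv ψ z|) := by
            rw [abs_mul, abs_mul, abs_mul, abs_neg, abs_of_pos (by linarith : (0:ℝ) < 1+ε),
              abs_of_nonneg hnn, abs_mul]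
            ring
        _ ≤ (1+ε) * ((1 + ψ z) ^ (-(1+ε) - 1) * (K * (1 + ψ z))) := by
            apply mul_le_mul_of_nonneg_left _ (by linarith)
            exact mul_le_mul_of_nonneg_left (hK z) hnn
        _ = (1+ε) * K * ((1 + ψ z) ^ (-(1+ε) - 1) * (1 + ψ z)) := by ring
        _ = (1+ε) * K * f z := by rw [hrw]
    calc |g z| ≤ |1 * f z| + |z * (deriv ψ z * -(1+ε) * (1 + ψ z) ^ (-(1+ε) - 1))| :=
          abs_add_le _ _
      _ ≤ f z + (1+ε) * K * f z := by
          rw [one_mul, abs_of_nonneg (hf0 z)]; linarith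
      _ = C * f z := by rw [hCdef]; ring
  -- main inequality for x ≤ y
  have hmain : ∀ x y : ℝ, x ≤ y → |x * deriv a x - y * deriv a y| ≤ C * |a x - a y| := by
    intro x y hxy
    have hiff : y * f y - x * f x = ∫ z in x..y, g z :=
      (intervalIntegral.integral_eq_sub_of_hasDerivAt (fun z _ => hF z)
        (hgc.intervalIntegrable (μ := volume) x y)).symm
    have hia : a y - a x = ∫ z in x..y, f z := by
      rw [ha x, ha y]
      exact intervalIntegral.integral_Iic_sub_Iic (μ := volume) hint.integrableOn hint.integrableOn
    have hanneg : 0 ≤ a y - a x := by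
      rw [hia]
      exact intervalIntegral.integral_nonneg hxy (fun z _ => hf0 z)
    have h1 : |y * f y - x * f x| ≤ ∫ z in x..y, |g z| := by
      rw [hiff]
      exact intervalIntegral.abs_integral_le_integral_abs hxy
    have h2 : (∫ z in x..y, |g z|) ≤ ∫ z in x..y, C * f z :=
      intervalIntegral.integral_mono_on hxy
        (hgc.abs.intervalIntegrable (μ := volume) x y) ((continuous_const.mul hfc).intervalIntegrable (μ := volume) x y)
        (fun z _ => hgb z)
    have h3 : (∫ z in x..y, C * f z) = C * (a y - a x) := by
      rw [intervalIntegral.integral_const_mul, ← hia]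
    rw [hda]
    rw [abs_sub_comm (a x) (a y), abs_of_nonneg hanneg, abs_sub_comm]
    calc |y * f y - x * f x| ≤ ∫ z in x..y, |g z| := h1
      _ ≤ C * (a y - a x) := h3 ▸ h2
  intro x y
  rcases le_total x y with h | h
  · exact hmain x y h
  · rw [abs_sub_comm, abs_sub_comm (a x)]
    exact hmain y x h
end

section
/- Let M be a random variable with the Poisson distribution of parameter λ > 0. Then E[ |√M − √λ| ] ≤ 1. -/
open MeasureTheory ProbabilityTheory
open scoped NNReal ENNReal Nat

/-! Because `√n + √λ ≥ √λ`, we have `|√n - √λ| = |n - λ| / (√n + √λ) ≤ |n - λ| / √λ`, so the second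
moment of `|√M - √λ|` is at most `Var M / λ = 1`; by Cauchy–Schwarz the first moment is at most the
square root of the second. -/

theorem Real.hasSum_descFactorial_mul_pow_div_factorial (x : ℝ) (j : ℕ) :
    HasSum (fun k : ℕ => (k.descFactorial j : ℝ) * x ^ k / k !) (x ^ j * Real.exp x) := by
  have hexp : HasSum (fun k : ℕ => x ^ k / k !) (Real.exp x) := by
    rw [Real.exp_eq_exp_ℝ]
    exact NormedSpace.expSeries_div_hasSum_exp x
  refine (hasSum_nat_add_iff' j).1 ?_
  have hvanish : ∑ k ∈ Finset.range j, (k.descFactorial j : ℝ) * x ^ k / k ! = 0 :=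
    Finset.sum_eq_zero fun k hk => by
      simp [Nat.descFactorial_of_lt (Finset.mem_range.1 hk)]
  rw [hvanish, sub_zero]
  refine (hexp.mul_left (x ^ j)).congr_fun fun k => ?_
  have hfac := Nat.factorial_mul_descFactorial (Nat.le_add_left j k)
  rw [Nat.add_sub_cancel] at hfac
  rw [← hfac, pow_add]
  push_cast
  field_simp

theorem Real.hasSum_sq_sub_mul_pow_div_factorial (x : ℝ) :
    HasSum (fun k : ℕ => ((k : ℝ) - x) ^ 2 * x ^ k / k !) (x * Real.exp x) := by
  -- `(k - x) ^ 2 = k (k - 1) + (1 - 2 x) k + x ^ 2`, a combination of descending factorials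
  have h := ((hasSum_descFactorial_mul_pow_div_factorial x 2).add
    ((hasSum_descFactorial_mul_pow_div_factorial x 1).mul_left (1 - 2 * x))).add
    ((hasSum_descFactorial_mul_pow_div_factorial x 0).mul_left (x ^ 2))
  convert h using 1
  · funext k
    simp only [Nat.cast_descFactorial_two, Nat.descFactorial_one, Nat.descFactorial_zero]
    push_cast
    ring
  · ring

theorem lintegral_sq_sub_poissonMeasure (r : ℝ≥0) :
    ∫⁻ n, ENNReal.ofReal (((n : ℝ) - r) ^ 2) ∂poissonMeasure r = ENNReal.ofReal r := by
  have h : HasSum (fun n : ℕ => ((n : ℝ) - r) ^ 2 * (Real.exp (-r) * r ^ n / n !)) r := by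
    have h' := (Real.hasSum_sq_sub_mul_pow_div_factorial r).mul_left (Real.exp (-r))
    rw [mul_left_comm, ← Real.exp_add, neg_add_cancel, Real.exp_zero, mul_one] at h'
    exact h'.congr_fun fun n => by ring
  rw [lintegral_countable']
  simp_rw [poissonMeasure_singleton, ← ENNReal.ofReal_mul (sq_nonneg _)]
  rw [← ENNReal.ofReal_tsum_of_nonneg (fun n => by positivity) h.summable, h.tsum_eq]

theorem Real.sq_sqrt_sub_sqrt_le {x y : ℝ} (hx : 0 ≤ x) (hy : 0 < y) :
    (√x - √y) ^ 2 ≤ (x - y) ^ 2 / y := by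
  have hfactor : x - y = (√x - √y) * (√x + √y) := by
    linear_combination sq_sqrt hy.le - sq_sqrt hx
  rw [le_div_iff₀ hy]
  calc (√x - √y) ^ 2 * y = (√x - √y) ^ 2 * √y ^ 2 := by rw [sq_sqrt hy.le]
    _ ≤ (√x - √y) ^ 2 * (√x + √y) ^ 2 := by gcongr; linarith [sqrt_nonneg x]
    _ = (x - y) ^ 2 := by rw [hfactor, mul_pow]

theorem sq_lintegral_le_lintegral_sq {α : Type*} [MeasurableSpace α] {μ : Measure α}
    [IsProbabilityMeasure μ] {f : α → ℝ≥0∞} (hf : AEMeasurable f μ) :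
    (∫⁻ a, f a ∂μ) ^ 2 ≤ ∫⁻ a, f a ^ 2 ∂μ := by
  have h := ENNReal.lintegral_mul_le_Lp_mul_Lq μ Real.HolderConjugate.two_two hf aemeasurable_const
    (g := 1)
  simp only [Pi.mul_apply, Pi.one_apply, mul_one, ENNReal.rpow_two, one_pow, lintegral_one,
    measure_univ, ENNReal.one_rpow] at h
  calc (∫⁻ a, f a ∂μ) ^ 2 ≤ ((∫⁻ a, f a ^ 2 ∂μ) ^ (1 / 2 : ℝ)) ^ 2 := by gcongr
    _ = ∫⁻ a, f a ^ 2 ∂μ := by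
      rw [← ENNReal.rpow_natCast, ← ENNReal.rpow_mul]; norm_num

theorem lintegral_abs_sqrt_sub_sqrt_poissonMeasure_le_one {r : ℝ≥0} (hr : 0 < r) :
    ∫⁻ n, ENNReal.ofReal |√(n : ℝ) - √r| ∂poissonMeasure r ≤ 1 := by
  have hsq : ∫⁻ n, ENNReal.ofReal |√(n : ℝ) - √r| ^ 2 ∂poissonMeasure r ≤ 1 :=
    calc ∫⁻ n, ENNReal.ofReal |√(n : ℝ) - √r| ^ 2 ∂poissonMeasure r
        ≤ ∫⁻ n, ENNReal.ofReal (((n : ℝ) - r) ^ 2) * ENNReal.ofReal (r : ℝ)⁻¹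
            ∂poissonMeasure r := by
          refine lintegral_mono fun n => ?_
          rw [← ENNReal.ofReal_pow (abs_nonneg _), ← ENNReal.ofReal_mul (sq_nonneg _), sq_abs,
            ← div_eq_mul_inv]
          exact ENNReal.ofReal_le_ofReal (Real.sq_sqrt_sub_sqrt_le n.cast_nonneg hr)
      _ = 1 := by
          rw [lintegral_mul_const _ .of_discrete, lintegral_sq_sub_poissonMeasure,
            ← ENNReal.ofReal_mul r.coe_nonneg, mul_inv_cancel₀ (by exact_mod_cast hr.ne'),
            ENNReal.ofReal_one]
  exact (pow_le_one_iff two_ne_zero).1 ((sq_lintegral_le_lintegral_sq .of_discrete).trans hsq)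

theorem map_eq_poissonMeasure {Ω : Type*} [MeasurableSpace Ω] {P : Measure Ω} {M : Ω → ℕ}
    (hM : Measurable M) {r : ℝ≥0}
    (hpois : ∀ k : ℕ, P {ω | M ω = k} = ENNReal.ofReal (Real.exp (-r) * r ^ k / k !)) :
    P.map M = poissonMeasure r :=
  Measure.ext_of_singleton fun k => by
    rw [Measure.map_apply hM (measurableSet_singleton k), poissonMeasure_singleton]
    exact hpois k

theorem stmt6_general {Ω : Type} [MeasurableSpace Ω] (P : Measure Ω)
    (M : Ω → ℕ) (hM : Measurable M) (lam : ℝ) (hlam : 0 < lam)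
    (hpois : ∀ k : ℕ, P {ω | M ω = k}
      = ENNReal.ofReal (Real.exp (-lam) * lam ^ k / (Nat.factorial k))) :
    ∫⁻ ω, ENNReal.ofReal |Real.sqrt (M ω) - Real.sqrt lam| ∂P ≤ 1 := by
  lift lam to ℝ≥0 using hlam.le with r
  rw [← lintegral_map (f := fun n : ℕ => ENNReal.ofReal |√(n : ℝ) - √r|) .of_discrete hM,
    map_eq_poissonMeasure hM hpois]
  exact lintegral_abs_sqrt_sub_sqrt_poissonMeasure_le_one (by exact_mod_cast hlam)

/-- If `M` is Poisson with parameter `λ > 0`, then `E[|√M − √λ|] ≤ 1`. -/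
theorem stmt6 {Ω : Type} [MeasurableSpace Ω] (P : Measure Ω) [IsProbabilityMeasure P]
    (M : Ω → ℕ) (hM : Measurable M) (lam : ℝ) (hlam : 0 < lam)
    (hpois : ∀ k : ℕ, P {ω | M ω = k}
      = ENNReal.ofReal (Real.exp (-lam) * lam ^ k / (Nat.factorial k))) :
    ∫⁻ ω, ENNReal.ofReal |Real.sqrt (M ω) - Real.sqrt lam| ∂P ≤ 1 :=
  stmt6_general P M hM lam hlam hpois
end
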